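/- If M is strongly chromatic-choosable with χ(M) ≥ a + 1, then the least b such that χ_ℓ(M □ K_{a,b}) = χ_ℓ(M) + a is exactly (P_ℓ(M, χ_ℓ(M) + a − 1))^a. -/
import Mathlib


open SimpleGraph

/-- A proper coloring of `G` from the list assignment `L`. -/
def IsProperListColoring {V : Type*} (G : SimpleGraph V) (L : V → Finset ℕ) (f : V → ℕ) : Prop :=
  (∀ v, f v ∈ L v) ∧ ∀ ⦃v w⦄, G.Adj v w → f v ≠ f w

/-- `G` is `k`-choosable: every `k`-assignment admits a proper coloring. -/
def Choosable {V : Type*} (G : SimpleGraph V) (k : ℕ) : Prop :=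
  ∀ L : V → Finset ℕ, (∀ v, (L v).card = k) → ∃ f, IsProperListColoring G L f

/-- The list chromatic number: the least `k` such that `G` is `k`-choosable. -/
noncomputable def listChromaticNumber {V : Type*} (G : SimpleGraph V) : ℕ :=
  sInf {k | Choosable G k}

/-- The list color function `P_ℓ(G,k)`: the minimum number of proper `L`-colorings
over all `k`-assignments `L`. -/
noncomputable def listColorFunction {V : Type*} (G : SimpleGraph V) (k : ℕ) : ℕ :=
  sInf {n | ∃ L : V → Finset ℕ, (∀ v, (L v).card = k) ∧
    n = Nat.card {f : V → ℕ // IsProperListColoring G L f}}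

/-- `G` is strong `k`-chromatic-choosable: `χ(G) = k` and every `(k-1)`-assignment
admitting no proper coloring is constant. -/
def StrongChromChoosable {V : Type*} (G : SimpleGraph V) (k : ℕ) : Prop :=
  G.chromaticNumber = k ∧
  ∀ L : V → Finset ℕ, (∀ v, (L v).card = k - 1) →
    (¬ ∃ f, IsProperListColoring G L f) → ∀ v w, L v = L w

-- ###### auxiliary lemmas ######
section Aux
variable {V : Type*} {G : SimpleGraph V}

lemma IsProperListColoring.mono {L T : V → Finset ℕ} {f : V → ℕ}
    (h : IsProperListColoring G T f) (hTL : ∀ v, T v ⊆ L v) :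
    IsProperListColoring G L f :=
  ⟨fun v => hTL v (h.1 v), h.2⟩

lemma exists_shrink (L : V → Finset ℕ) (m : ℕ) (h : ∀ v, m ≤ (L v).card) :
    ∃ T : V → Finset ℕ, (∀ v, T v ⊆ L v) ∧ ∀ v, (T v).card = m := by
  choose T hT1 hT2 using fun v => Finset.exists_subset_card_eq (h v)
  exact ⟨T, hT1, hT2⟩

lemma Choosable.mono {j m : ℕ} (h : Choosable G j) (hjm : j ≤ m) : Choosable G m := by
  intro L hL
  obtain ⟨T, hT1, hT2⟩ := exists_shrink L j (fun v => (hL v) ▸ hjm)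
  obtain ⟨f, hf⟩ := h T hT2
  exact ⟨f, hf.mono hT1⟩

/-- color any list assignment with lists of size ≥ j when `G` is `j`-choosable -/
lemma Choosable.exists_coloring {j : ℕ} (h : Choosable G j) (L : V → Finset ℕ)
    (hL : ∀ v, j ≤ (L v).card) : ∃ f, IsProperListColoring G L f := by
  obtain ⟨T, hT1, hT2⟩ := exists_shrink L j hL
  obtain ⟨f, hf⟩ := h T hT2
  exact ⟨f, hf.mono hT1⟩

lemma colorable_of_const_coloring {S : Finset ℕ} {f : V → ℕ}
    (h : IsProperListColoring G (fun _ => S) f) : G.Colorable S.card := by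
  have C : G.Coloring {x // x ∈ S} :=
    Coloring.mk (fun v => ⟨f v, h.1 v⟩) (fun {v w} hadj => by
      simpa [Subtype.ext_iff] using h.2 hadj)
  simpa using C.colorable

lemma exists_const_coloring {S : Finset ℕ} {m : ℕ} (hc : G.Colorable m)
    (hS : S.card = m) : ∃ f, IsProperListColoring G (fun _ => S) f := by
  obtain ⟨C⟩ := hc
  refine ⟨fun v => ((S.equivFin.symm (Fin.cast hS.symm (C v))) : ℕ), fun v => ?_, ?_⟩
  · exact (S.equivFin.symm _).2
  · intro v w hadj heq
    exact C.valid hadj (by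
      have := Subtype.ext heq
      have := S.equivFin.symm.injective this
      simpa using congrArg (Fin.cast hS) this)

lemma finite_colorings [Fintype V] (L : V → Finset ℕ) :
    Finite {f : V → ℕ // IsProperListColoring G L f} := by
  have : ∀ (f : {f : V → ℕ // IsProperListColoring G L f}) (v : V), f.1 v ∈ L v :=
    fun f v => f.2.1 v
  apply Finite.of_injective (fun f (v : V) => (⟨f.1 v, this f v⟩ : {x // x ∈ L v}))
  intro f g hfg
  ext v
  exact congrArg Subtype.val (congrFun hfg v)

end Aux

-- ###### lemmas using strong chromatic choosability ######
section Strong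
variable {V : Type*} {M : SimpleGraph V} {k : ℕ}

lemma scc_colorable (h : StrongChromChoosable M k) : M.Colorable k :=
  chromaticNumber_le_iff_colorable.mp (le_of_eq h.1)

lemma scc_not_colorable (h : StrongChromChoosable M k) {m : ℕ} (hm : m < k) :
    ¬ M.Colorable m := by
  intro hc
  have h1 : M.chromaticNumber ≤ (m : ℕ∞) := hc.chromaticNumber_le
  rw [h.1] at h1
  exact absurd (Nat.cast_le.mp h1) (not_le.mpr hm)

lemma scc_two_vertices (h : StrongChromChoosable M k) (hk2 : 2 ≤ k) :
    ∃ u w : V, u ≠ w := by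
  by_contra hno
  push_neg at hno
  have : M.Colorable 1 := by
    refine ⟨Coloring.mk (fun _ => 0) ?_⟩
    intro v w hadj
    exact absurd (hno v w) (M.ne_of_adj hadj)
  exact scc_not_colorable h (by omega) this

lemma scc_no_const_coloring (h : StrongChromChoosable M k) {S : Finset ℕ} {m : ℕ}
    (hm : m < k) (hS : S.card = m) :
    ¬ ∃ f, IsProperListColoring M (fun _ => S) f := by
  rintro ⟨f, hf⟩
  exact scc_not_colorable h hm (hS ▸ colorable_of_const_coloring hf)

/-- Structure lemma: a list assignment with all lists of size ≥ k-1 admitting no proper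
coloring must have all lists of size exactly k-1 and be constant. -/
lemma scc_key_constant (h : StrongChromChoosable M k) (hk2 : 2 ≤ k)
    (L : V → Finset ℕ) (hcard : ∀ v, k - 1 ≤ (L v).card)
    (hno : ¬ ∃ f, IsProperListColoring M L f) :
    (∀ v, (L v).card = k - 1) ∧ ∀ v w, L v = L w := by
  haveI := Classical.decEq V
  have hcards : ∀ v, (L v).card = k - 1 := by
    by_contra hbad
    push_neg at hbad
    obtain ⟨v₀, hv₀⟩ := hbad
    have hv₀' : k - 1 < (L v₀).card := lt_of_le_of_ne (hcard v₀) (Ne.symm hv₀)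
    obtain ⟨T, hT1, hT2⟩ := exists_shrink L (k - 1) hcard
    -- build a second (k-1)-subset of L v₀ distinct from T v₀
    have hTv₀ := hT2 v₀
    obtain ⟨x, hxL, hxT⟩ : ∃ x ∈ L v₀, x ∉ T v₀ := by
      by_contra hc
      push_neg at hc
      have := Finset.eq_of_subset_of_card_le hc (by omega)
      rw [← this] at hTv₀
      omega
    obtain ⟨y, hy⟩ : ∃ y, y ∈ T v₀ := Finset.card_pos.mp (by omega) |>.exists_mem
    set S₂ : Finset ℕ := insert x ((T v₀).erase y) with hS₂
    have hS₂card : S₂.card = k - 1 := by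
      rw [hS₂, Finset.card_insert_of_notMem (fun hx => hxT (Finset.erase_subset _ _ hx)),
        Finset.card_erase_of_mem hy, hT2]
      omega
    have hyS₂ : y ∉ S₂ := by
      rw [hS₂]
      simp only [Finset.mem_insert, Finset.mem_erase]
      rintro (rfl | ⟨hne, _⟩)
      · exact hxT hy
      · exact hne rfl
    set T₂ := Function.update T v₀ S₂ with hT₂
    have hT₂sub : ∀ v, T₂ v ⊆ L v := by
      intro v
      rcases eq_or_ne v v₀ with rfl | hne
      · rw [hT₂, Function.update_self, hS₂]
        intro z hz
        rcases Finset.mem_insert.mp hz with rfl | hz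
        · exact hxL
        · exact hT1 _ (Finset.erase_subset _ _ hz)
      · rw [hT₂, Function.update_of_ne hne]; exact hT1 v
    have hT₂card : ∀ v, (T₂ v).card = k - 1 := by
      intro v
      rcases eq_or_ne v v₀ with rfl | hne
      · rw [hT₂, Function.update_self]; exact hS₂card
      · rw [hT₂, Function.update_of_ne hne]; exact hT2 v
    have hnoT : ¬ ∃ f, IsProperListColoring M T f :=
      fun ⟨f, hf⟩ => hno ⟨f, hf.mono hT1⟩
    have hnoT₂ : ¬ ∃ f, IsProperListColoring M T₂ f :=
      fun ⟨f, hf⟩ => hno ⟨f, hf.mono hT₂sub⟩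
    obtain ⟨u, w, huw⟩ := scc_two_vertices h hk2
    have hw : ∃ w, w ≠ v₀ := by
      rcases eq_or_ne u v₀ with rfl | hne
      · exact ⟨w, Ne.symm huw⟩
      · exact ⟨u, hne⟩
    obtain ⟨w, hwv₀⟩ := hw
    have e1 : T v₀ = T w := h.2 T hT2 hnoT v₀ w
    have e2 : T₂ v₀ = T₂ w := h.2 T₂ hT₂card hnoT₂ v₀ w
    rw [hT₂, Function.update_self, Function.update_of_ne hwv₀] at e2
    rw [e1, ← e2] at hy
    exact hyS₂ hy
  exact ⟨hcards, h.2 L hcards hno⟩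

lemma scc_choosable (h : StrongChromChoosable M k) (hk2 : 2 ≤ k) : Choosable M k := by
  haveI := Classical.decEq V
  intro L hL
  by_contra hno
  have hconst : ∀ v w, L v = L w := by
    intro u w
    by_contra hne
    -- find c ∈ L u \ L w
    obtain ⟨c, hcu, hcw⟩ : ∃ c ∈ L u, c ∉ L w := by
      by_contra hc
      push_neg at hc
      exact hne (Finset.eq_of_subset_of_card_le hc (by rw [hL, hL]))
    have huw : u ≠ w := fun e => hne (e ▸ rfl)
    -- shrink, keeping c at u
    obtain ⟨T, hT1, hT2⟩ := exists_shrink L (k - 1) (fun v => by rw [hL]; omega)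
    obtain ⟨d, hd, hdc⟩ : ∃ d ∈ L u, d ≠ c := by
      have : 1 < (L u).card := by rw [hL]; omega
      obtain ⟨d, hd1, hd2⟩ := Finset.exists_mem_ne this c
      exact ⟨d, hd1, hd2⟩
    set T₂ := Function.update T u ((L u).erase d) with hT₂
    have hT₂sub : ∀ v, T₂ v ⊆ L v := by
      intro v
      rcases eq_or_ne v u with rfl | hne'
      · rw [hT₂, Function.update_self]; exact Finset.erase_subset _ _
      · rw [hT₂, Function.update_of_ne hne']; exact hT1 v
    have hT₂card : ∀ v, (T₂ v).card = k - 1 := by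
      intro v
      rcases eq_or_ne v u with rfl | hne'
      · rw [hT₂, Function.update_self, Finset.card_erase_of_mem hd, hL]
      · rw [hT₂, Function.update_of_ne hne']; exact hT2 v
    have hnoT₂ : ¬ ∃ f, IsProperListColoring M T₂ f :=
      fun ⟨f, hf⟩ => hno ⟨f, hf.mono hT₂sub⟩
    have e := h.2 T₂ hT₂card hnoT₂ u w
    rw [hT₂, Function.update_self, Function.update_of_ne (Ne.symm huw)] at e
    have hcu' : c ∈ (L u).erase d := Finset.mem_erase.mpr ⟨Ne.symm hdc, hcu⟩
    rw [e] at hcu'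
    exact hcw (hT1 w hcu')
  -- L is constant; use χ(M) = k
  rcases isEmpty_or_nonempty V with hV | hV
  · exact hno ⟨fun _ => 0, fun v => (IsEmpty.false v).elim, fun v => (IsEmpty.false v).elim⟩
  · obtain ⟨v₀⟩ := hV
    obtain ⟨f, hf⟩ := exists_const_coloring (scc_colorable h) (hL v₀)
    refine hno ⟨f, fun v => ?_, hf.2⟩
    rw [hconst v v₀]
    exact hf.1 v
end Strong

-- ###### list chromatic number and list color function facts ######
section Mid
variable {V : Type*} {M : SimpleGraph V} {k : ℕ}

lemma scc_listChromaticNumber (h : StrongChromChoosable M k) (hk2 : 2 ≤ k) :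
    listChromaticNumber M = k := by
  have hmem : k ∈ {m | Choosable M m} := scc_choosable h hk2
  refine le_antisymm (Nat.sInf_le hmem) (le_csInf ⟨k, hmem⟩ ?_)
  intro m hm
  by_contra hlt
  push_neg at hlt
  have hch : Choosable M (k - 1) := Choosable.mono hm (by omega)
  obtain ⟨f, hf⟩ := hch (fun _ => Finset.range (k - 1)) (fun _ => Finset.card_range _)
  exact scc_no_const_coloring h (show k - 1 < k by omega) (Finset.card_range (k - 1)) ⟨f, hf⟩

lemma scc_lcf_pos [Fintype V] (h : StrongChromChoosable M k) (hk2 : 2 ≤ k) {m : ℕ}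
    (hm : k ≤ m) : 1 ≤ listColorFunction M m := by
  rw [listColorFunction]
  refine le_csInf ⟨Nat.card {f : V → ℕ // IsProperListColoring M (fun _ => Finset.range m) f},
    ⟨fun _ => Finset.range m, fun _ => Finset.card_range m, rfl⟩⟩ ?_
  rintro n ⟨L, hL, rfl⟩
  obtain ⟨f, hf⟩ := (scc_choosable h hk2).exists_coloring L (fun v => by rw [hL v]; exact hm)
  have hne : Nonempty {f // IsProperListColoring M L f} := ⟨⟨f, hf⟩⟩
  exact Nat.one_le_iff_ne_zero.mpr (Nat.card_ne_zero.mpr ⟨hne, finite_colorings L⟩)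

lemma lcf_le [Fintype V] (G : SimpleGraph V) (m : ℕ) (L : V → Finset ℕ)
    (hL : ∀ v, (L v).card = m) :
    listColorFunction G m ≤ Nat.card {f : V → ℕ // IsProperListColoring G L f} :=
  Nat.sInf_le ⟨L, hL, rfl⟩

lemma lcf_attained [Fintype V] (G : SimpleGraph V) (m : ℕ) :
    ∃ L : V → Finset ℕ, (∀ v, (L v).card = m) ∧
      Nat.card {f : V → ℕ // IsProperListColoring G L f} = listColorFunction G m := by
  have hne : {n | ∃ L : V → Finset ℕ, (∀ v, (L v).card = m) ∧
      n = Nat.card {f : V → ℕ // IsProperListColoring G L f}}.Nonempty :=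
    ⟨_, ⟨fun _ => Finset.range m, fun _ => Finset.card_range m, rfl⟩⟩
  obtain ⟨L, hL, hcard⟩ := Nat.sInf_mem hne
  exact ⟨L, hL, hcard.symm⟩

/-- assembling a proper coloring of the product from colorings of the copies -/
lemma assemble_coloring {a b : ℕ} (L : V × (Fin a ⊕ Fin b) → Finset ℕ)
    (gl : Fin a → V → ℕ) (gr : Fin b → V → ℕ)
    (hl : ∀ i, IsProperListColoring M (fun v => L (v, Sum.inl i)) (gl i))
    (hrmem : ∀ j v, gr j v ∈ L (v, Sum.inr j))
    (hrprop : ∀ j, ∀ ⦃v w⦄, M.Adj v w → gr j v ≠ gr j w)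
    (hcross : ∀ i j v, gl i v ≠ gr j v) :
    IsProperListColoring (M □ completeBipartiteGraph (Fin a) (Fin b)) L
      (fun p => Sum.elim (fun i => gl i p.1) (fun j => gr j p.1) p.2) := by
  constructor
  · rintro ⟨v, (i | j)⟩
    · exact (hl i).1 v
    · exact hrmem j v
  · rintro ⟨v, u⟩ ⟨w, u'⟩ hadj
    rcases (boxProd_adj).mp hadj with ⟨hM, h2⟩ | ⟨hK, h1⟩
    · simp only at h2
      subst h2
      rcases u with i | j
      · exact (hl i).2 hM
      · exact hrprop j hM
    · simp only at h1
      subst h1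
      rcases u with i | j <;> rcases u' with i' | j'
      · simp [completeBipartiteGraph] at hK
      · exact hcross i j' v
      · exact (hcross i' j v).symm
      · simp [completeBipartiteGraph] at hK
end Mid

-- ###### the product is (k+a)-choosable ######
section Easy
variable {V : Type*} {M : SimpleGraph V} {k : ℕ}

lemma scc_easy (h : StrongChromChoosable M k) (hk2 : 2 ≤ k) (a b : ℕ) :
    Choosable (M □ completeBipartiteGraph (Fin a) (Fin b)) (k + a) := by
  intro L hL
  have hch := scc_choosable h hk2
  have hg : ∀ i : Fin a, ∃ f, IsProperListColoring M (fun v => L (v, Sum.inl i)) f :=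
    fun i => hch.exists_coloring _ (fun v => by rw [hL]; omega)
  choose g hg using hg
  have hh : ∀ j : Fin b, ∃ f, IsProperListColoring M
      (fun v => (L (v, Sum.inr j)) \ Finset.univ.image (fun i => g i v)) f := by
    intro j
    apply hch.exists_coloring
    intro v
    have h1 := Finset.le_card_sdiff (Finset.univ.image fun i => g i v) (L (v, Sum.inr j))
    have h2 : (Finset.univ.image fun i => g i v).card ≤ a :=
      le_trans Finset.card_image_le (by simp)
    have h3 := hL (v, Sum.inr j)
    omega
  choose gg hgg using hh
  refine ⟨_, assemble_coloring L g gg hg (fun j v => ?_) (fun j => (hgg j).2) (fun i j v heq => ?_)⟩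
  · exact (Finset.mem_sdiff.mp ((hgg j).1 v)).1
  · have := (Finset.mem_sdiff.mp ((hgg j).1 v)).2
    exact this (Finset.mem_image.mpr ⟨i, Finset.mem_univ i, heq⟩)
end Easy

-- ###### hard direction: b < P^a implies (k+a-1)-choosable ######
section Hard
variable {V : Type*} {M : SimpleGraph V} {k : ℕ}

lemma scc_hard [Fintype V] (h : StrongChromChoosable M k) (a b : ℕ) (ha : 1 ≤ a)
    (hk : a + 1 ≤ k) (hb : b < (listColorFunction M (k + a - 1)) ^ a) :
    Choosable (M □ completeBipartiteGraph (Fin a) (Fin b)) (k + a - 1) := by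
  have hk2 : 2 ≤ k := by omega
  set P := listColorFunction M (k + a - 1) with hP
  have hP1 : 1 ≤ P := scc_lcf_pos h hk2 (by omega)
  intro L hL
  set Li : Fin a → V → Finset ℕ := fun i v => L (v, Sum.inl i) with hLi
  haveI ColFin : ∀ i : Fin a, Finite {f : V → ℕ // IsProperListColoring M (Li i) f} :=
    fun i => finite_colorings _
  have hColP : ∀ i : Fin a, P ≤ Nat.card {f : V → ℕ // IsProperListColoring M (Li i) f} :=
    fun i => lcf_le M (k + a - 1) (Li i) (fun v => hL (v, Sum.inl i))
  have hNe : ∀ i : Fin a, Nonempty {f : V → ℕ // IsProperListColoring M (Li i) f} :=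
    fun i => (Nat.card_pos_iff.mp (Nat.lt_of_lt_of_le (by omega) (hColP i))).1
  set Tup := ∀ i : Fin a, {f : V → ℕ // IsProperListColoring M (Li i) f} with hTupdef
  have hTupcard : P ^ a ≤ Nat.card Tup := by
    rw [hTupdef, Nat.card_pi]
    calc P ^ a = ∏ _i : Fin a, P := by
          rw [Finset.prod_const, Finset.card_univ, Fintype.card_fin]
      _ ≤ _ := Finset.prod_le_prod (fun _ _ => Nat.zero_le _) (fun i _ => hColP i)
  set KS : Tup → Fin b → V → Finset ℕ :=
    fun c j v => L (v, Sum.inr j) \ Finset.univ.image (fun i => (c i).1 v) with hKS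
  by_cases hgood : ∃ c : Tup, ∀ j : Fin b, ∃ g, IsProperListColoring M (KS c j) g
  · obtain ⟨c, hc⟩ := hgood
    choose g hg using hc
    refine ⟨_, assemble_coloring L (fun i => (c i).1) (fun j => g j)
      (fun i => (c i).2) (fun j v => ?_) (fun j => (hg j).2) (fun i j v heq => ?_)⟩
    · exact (Finset.mem_sdiff.mp ((hg j).1 v)).1
    · exact (Finset.mem_sdiff.mp ((hg j).1 v)).2
        (Finset.mem_image.mpr ⟨i, Finset.mem_univ i, heq⟩)
  · push_neg at hgood
    exfalso
    choose jm hjm using hgood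
    have hkill : ∀ c : Tup, ¬ ∃ g, IsProperListColoring M (KS c (jm c)) g := by
      rintro c ⟨g, hg⟩
      exact hjm c g hg
    have hstruct : ∀ (c : Tup) (j : Fin b), (¬ ∃ g, IsProperListColoring M (KS c j) g) →
        (∀ v, (KS c j v).card = k - 1) ∧ ∀ v w, KS c j v = KS c j w := by
      intro c j hno
      refine scc_key_constant h hk2 _ ?_ hno
      intro v
      have h1 := Finset.le_card_sdiff (Finset.univ.image fun i => (c i).1 v) (L (v, Sum.inr j))
      have h2 : (Finset.univ.image fun i => (c i).1 v).card ≤ a :=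
        le_trans Finset.card_image_le (by simp)
      have h3 := hL (v, Sum.inr j)
      have h4 : (KS c j v).card = (L (v, Sum.inr j) \ Finset.univ.image fun i => (c i).1 v).card := rfl
      omega
    have himg : ∀ (c : Tup) (j : Fin b), (¬ ∃ g, IsProperListColoring M (KS c j) g) →
        ∀ v, (Finset.univ.image fun i => (c i).1 v) ⊆ L (v, Sum.inr j) ∧
          (Finset.univ.image fun i => (c i).1 v).card = a := by
      intro c j hno v
      have hcards := (hstruct c j hno).1 v
      have h3 := hL (v, Sum.inr j)
      have h4 := Finset.card_sdiff_add_card_inter (L (v, Sum.inr j))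
        (Finset.univ.image fun i => (c i).1 v)
      have h2 : (Finset.univ.image fun i => (c i).1 v).card ≤ a :=
        le_trans Finset.card_image_le (by simp)
      have h5 : (KS c j v).card = (L (v, Sum.inr j) \ Finset.univ.image fun i => (c i).1 v).card := rfl
      have h6 : a ≤ (L (v, Sum.inr j) ∩ Finset.univ.image fun i => (c i).1 v).card := by omega
      have hsub : (L (v, Sum.inr j) ∩ Finset.univ.image fun i => (c i).1 v)
          ⊆ Finset.univ.image fun i => (c i).1 v := Finset.inter_subset_right
      have heq := Finset.eq_of_subset_of_card_le hsub (le_trans h2 h6)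
      constructor
      · rw [← heq]; exact Finset.inter_subset_left
      · have := Finset.card_le_card hsub
        omega
    -- cross-copy pointwise disjointness
    have hdisj : ∀ (i i' : Fin a), i ≠ i' →
        ∀ (f : {f : V → ℕ // IsProperListColoring M (Li i) f})
          (f' : {f : V → ℕ // IsProperListColoring M (Li i') f}) (v : V), f.1 v ≠ f'.1 v := by
      intro i i' hii' f f' v heq
      set d : Tup := fun m => if hm : m = i then ⟨f.1, by subst hm; exact f.2⟩
        else if hm' : m = i' then ⟨f'.1, by subst hm'; exact f'.2⟩ else (hNe m).some with hd
      have hdi : (d i).1 = f.1 := by rw [hd]; simp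
      have hdi' : (d i').1 = f'.1 := by rw [hd]; simp [Ne.symm hii']
      have hdup : (d i).1 v = (d i').1 v := by rw [hdi, hdi']; exact heq
      have hia := (himg d (jm d) (hkill d) v).2
      have hsub : (Finset.univ.image fun m => (d m).1 v)
          ⊆ (Finset.univ.erase i).image fun m => (d m).1 v := by
        intro x hx
        obtain ⟨m, _, rfl⟩ := Finset.mem_image.mp hx
        rcases eq_or_ne m i with rfl | hmi
        · exact Finset.mem_image.mpr
            ⟨i', Finset.mem_erase.mpr ⟨Ne.symm hii', Finset.mem_univ _⟩, hdup.symm⟩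
        · exact Finset.mem_image.mpr ⟨m, Finset.mem_erase.mpr ⟨hmi, Finset.mem_univ _⟩, rfl⟩
      have hle := Finset.card_le_card hsub
      have h6 := Finset.card_image_le (s := Finset.univ.erase i) (f := fun m => (d m).1 v)
      have h7 : (Finset.univ.erase i).card = a - 1 := by
        rw [Finset.card_erase_of_mem (Finset.mem_univ i)]
        simp
      omega
    have hNeV : Nonempty V := by
      obtain ⟨u, w, _⟩ := scc_two_vertices h hk2
      exact ⟨u⟩
    obtain ⟨v₀⟩ := hNeV
    have hinj : Function.Injective jm := by
      intro c c' hcc'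
      set j := jm c with hj
      have k1 : ¬ ∃ g, IsProperListColoring M (KS c j) g := hkill c
      have k2 : ¬ ∃ g, IsProperListColoring M (KS c' j) g := by
        have h2' := hkill c'
        rw [← hcc'] at h2'
        exact h2'
      have key : ∀ (d d' : Tup), (¬ ∃ g, IsProperListColoring M (KS d j) g) →
          (¬ ∃ g, IsProperListColoring M (KS d' j) g) → KS d j v₀ ⊆ KS d' j v₀ := by
        intro d d' hd hd' x hx
        by_contra hxn
        have hxall : ∀ v, x ∈ KS d j v := by
          intro v
          rw [(hstruct d j hd).2 v v₀]
          exact hx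
        have hxL : ∀ v, x ∈ L (v, Sum.inr j) := fun v => (Finset.mem_sdiff.mp (hxall v)).1
        have hximg : ∀ v, x ∈ Finset.univ.image fun i => (d' i).1 v := by
          intro v
          have hxn' : x ∉ KS d' j v := by
            intro hmem
            apply hxn
            rw [← (hstruct d' j hd').2 v v₀]
            exact hmem
          by_contra hni
          exact hxn' (Finset.mem_sdiff.mpr ⟨hxL v, hni⟩)
        have hcol : ∀ v, ∃ i : Fin a, (d' i).1 v = x := by
          intro v
          obtain ⟨i, _, hi⟩ := Finset.mem_image.mp (hximg v)
          exact ⟨i, hi⟩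
        choose col hcol using hcol
        have hcolN : M.Colorable a := by
          refine ⟨Coloring.mk col ?_⟩
          intro v w hadj hcc
          exact ((d' (col v)).2.2 hadj) (by rw [hcol v, hcc, hcol w])
        exact scc_not_colorable h (by omega) hcolN
      have hCC : KS c j v₀ = KS c' j v₀ :=
        le_antisymm (key c c' k1 k2) (key c' c k2 k1)
      have himgeq : ∀ v, (Finset.univ.image fun i => (c i).1 v)
          = (Finset.univ.image fun i => (c' i).1 v) := by
        intro v
        have e1 : KS c j v = KS c' j v := by
          rw [(hstruct c j k1).2 v v₀, (hstruct c' j k2).2 v v₀, hCC]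
        have i1 := himg c j k1 v
        have i2 := himg c' j k2 v
        have e2 : ∀ (d : Tup), (Finset.univ.image fun i => (d i).1 v) ⊆ L (v, Sum.inr j) →
            ((Finset.univ.image fun i => (d i).1 v) : Finset ℕ)
              = L (v, Sum.inr j) \ KS d j v := by
          intro d hdsub
          ext x
          simp only [Finset.mem_sdiff]
          constructor
          · intro hx
            refine ⟨hdsub hx, fun hks => ?_⟩
            exact (Finset.mem_sdiff.mp hks).2 hx
          · rintro ⟨hxL, hxn⟩
            by_contra hni
            exact hxn (Finset.mem_sdiff.mpr ⟨hxL, hni⟩)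
        rw [e2 c i1.1, e2 c' i2.1, e1]
      funext i
      apply Subtype.ext
      funext v
      have hmem : (c' i).1 v ∈ Finset.univ.image fun m => (c m).1 v := by
        rw [himgeq v]
        exact Finset.mem_image.mpr ⟨i, Finset.mem_univ i, rfl⟩
      obtain ⟨m, _, hm⟩ := Finset.mem_image.mp hmem
      rcases eq_or_ne m i with rfl | hmi
      · exact hm
      · exact absurd hm (hdisj m i hmi (c m) (c' i) v)
    have hcard := Nat.card_le_card_of_injective jm hinj
    have hfb : Nat.card (Fin b) = b := by simp
    omega
end Hard

-- ###### construction: with b = P^a right copies, not (k+a-1)-choosable ######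
section Constr
variable {V : Type*} {M : SimpleGraph V} {k : ℕ}

lemma scc_construct [Fintype V] (h : StrongChromChoosable M k) (a : ℕ) (ha : 1 ≤ a)
    (hk : a + 1 ≤ k) :
    ¬ Choosable (M □ completeBipartiteGraph (Fin a)
        (Fin ((listColorFunction M (k + a - 1)) ^ a))) (k + a - 1) := by
  have hk2 : 2 ≤ k := by omega
  set P := listColorFunction M (k + a - 1) with hP
  intro hch
  obtain ⟨L₀, hL₀card, hL₀count⟩ := lcf_attained M (k + a - 1)
  set σ : Fin a → ℕ → ℕ := fun i x => (k - 1) + i.1 + a * x with hσ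
  have hσinj : ∀ (i i' : Fin a) (x x' : ℕ), σ i x = σ i' x' → i = i' ∧ x = x' := by
    intro i i' x x' hexy
    have hi := i.isLt
    have hi' := i'.isLt
    rw [hσ] at hexy
    simp only at hexy
    have e1 : i.1 + a * x = i'.1 + a * x' := by omega
    have e2 : i.1 % a = i'.1 % a := by
      have := congrArg (· % a) e1
      simpa [Nat.add_mul_mod_self_left] using this
    rw [Nat.mod_eq_of_lt hi, Nat.mod_eq_of_lt hi'] at e2
    have e3 : i = i' := Fin.ext e2
    refine ⟨e3, ?_⟩
    have e4 : a * x = a * x' := by omega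
    exact Nat.eq_of_mul_eq_mul_left (by omega) e4
  have hσge : ∀ (i : Fin a) (x : ℕ), k - 1 ≤ σ i x := fun i x => by
    rw [hσ]; simp; omega
  haveI : Finite {f : V → ℕ // IsProperListColoring M L₀ f} := finite_colorings _
  obtain ⟨n, ⟨e⟩⟩ := Finite.exists_equiv_fin (Fin a → {f : V → ℕ // IsProperListColoring M L₀ f})
  have hn : n = P ^ a := by
    have h1 := Nat.card_eq_of_equiv_fin e
    rw [Nat.card_fun, hL₀count, Nat.card_eq_fintype_card, Fintype.card_fin] at h1
    rw [hP]
    exact h1.symm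
  subst hn
  -- the bad list assignment
  set LL : V × (Fin a ⊕ Fin (P ^ a)) → Finset ℕ := fun p =>
    Sum.elim (fun i => (L₀ p.1).image (σ i))
      (fun j => Finset.range (k - 1) ∪
        Finset.univ.image (fun i : Fin a => σ i ((e.symm j i).1 p.1))) p.2 with hLL
  have hLLcard : ∀ p, (LL p).card = k + a - 1 := by
    rintro ⟨v, (i | j)⟩
    · have : ((L₀ v).image (σ i)).card = (L₀ v).card :=
        Finset.card_image_of_injective _ (fun x x' hx => (hσinj i i x x' hx).2)
      rw [hLL]
      simp only [Sum.elim_inl]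
      rw [this, hL₀card]
    · rw [hLL]
      simp only [Sum.elim_inr]
      have hdis : Disjoint (Finset.range (k - 1))
          (Finset.univ.image (fun i : Fin a => σ i ((e.symm j i).1 v))) := by
        rw [Finset.disjoint_left]
        intro x hx hx'
        obtain ⟨i, _, rfl⟩ := Finset.mem_image.mp hx'
        have := hσge i ((e.symm j i).1 v)
        have := Finset.mem_range.mp hx
        omega
      rw [Finset.card_union_of_disjoint hdis, Finset.card_range]
      have himc : (Finset.univ.image (fun i : Fin a => σ i ((e.symm j i).1 v))).card = a := by
        rw [Finset.card_image_of_injective _ (fun i i' hx => (hσinj i i' _ _ hx).1)]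
        simp
      rw [himc]
      omega
  obtain ⟨f, hf⟩ := hch LL hLLcard
  -- recover the left colorings
  have hgex : ∀ (i : Fin a) (v : V), ∃ x ∈ L₀ v, σ i x = f (v, Sum.inl i) := by
    intro i v
    have := hf.1 (v, Sum.inl i)
    rw [hLL] at this
    simp only [Sum.elim_inl] at this
    obtain ⟨x, hx1, hx2⟩ := Finset.mem_image.mp this
    exact ⟨x, hx1, hx2⟩
  choose g hg1 hg2 using hgex
  have hgproper : ∀ i, IsProperListColoring M L₀ (g i) := by
    intro i
    refine ⟨hg1 i, ?_⟩
    intro v w hadj heq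
    have hadj' : (M □ completeBipartiteGraph (Fin a) (Fin (P ^ a))).Adj
        (v, Sum.inl i) (w, Sum.inl i) := boxProd_adj_left.mpr hadj
    apply hf.2 hadj'
    rw [← hg2 i v, ← hg2 i w, heq]
  set GT : Fin a → {f : V → ℕ // IsProperListColoring M L₀ f} :=
    fun i => ⟨g i, hgproper i⟩ with hGT
  set j := e GT with hj
  have hsymm : e.symm j = GT := by rw [hj]; exact e.symm_apply_apply GT
  -- the right copy j can only use the small constant palette
  have hrange : ∀ v, f (v, Sum.inr j) ∈ Finset.range (k - 1) := by
    intro v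
    have hmem := hf.1 (v, Sum.inr j)
    rw [hLL] at hmem
    simp only [Sum.elim_inr] at hmem
    rcases Finset.mem_union.mp hmem with hmem | hmem
    · exact hmem
    · exfalso
      obtain ⟨i, _, hi⟩ := Finset.mem_image.mp hmem
      rw [hsymm] at hi
      have hadj' : (M □ completeBipartiteGraph (Fin a) (Fin (P ^ a))).Adj
          (v, Sum.inl i) (v, Sum.inr j) := by
        apply boxProd_adj.mpr
        right
        exact ⟨by simp [completeBipartiteGraph], rfl⟩
      apply hf.2 hadj'
      rw [← hg2 i v]
      rw [hGT] at hi
      exact hi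
  have hcolor : ∃ f₀, IsProperListColoring M (fun _ => Finset.range (k - 1)) f₀ := by
    refine ⟨fun v => f (v, Sum.inr j), fun v => hrange v, ?_⟩
    intro v w hadj
    exact hf.2 (boxProd_adj_left.mpr hadj)
  exact scc_no_const_coloring h (show k - 1 < k by omega) (Finset.card_range (k - 1)) hcolor
end Constr

theorem f_a_eq_listColorFunction_pow {V : Type*} [Fintype V]
    (M : SimpleGraph V) (k a : ℕ) (h : StrongChromChoosable M k)
    (ha : 1 ≤ a) (hk : a + 1 ≤ k) :
    IsLeast {b : ℕ | listChromaticNumber (M □ completeBipartiteGraph (Fin a) (Fin b)) =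
        listChromaticNumber M + a}
      ((listColorFunction M (listChromaticNumber M + a - 1)) ^ a) := by
  have hk2 : 2 ≤ k := by omega
  have hlcn : listChromaticNumber M = k := scc_listChromaticNumber h hk2
  rw [hlcn]
  set P := listColorFunction M (k + a - 1) with hP
  constructor
  · show listChromaticNumber (M □ completeBipartiteGraph (Fin a) (Fin (P ^ a))) = k + a
    have hub : Choosable (M □ completeBipartiteGraph (Fin a) (Fin (P ^ a))) (k + a) :=
      scc_easy h hk2 a _
    have hlb := scc_construct h a ha hk
    refine le_antisymm (Nat.sInf_le hub) ?_
    by_contra hlt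
    push_neg at hlt
    have hne : {m | Choosable (M □ completeBipartiteGraph (Fin a) (Fin (P ^ a))) m}.Nonempty :=
      ⟨k + a, hub⟩
    have h1 : Choosable (M □ completeBipartiteGraph (Fin a) (Fin (P ^ a)))
        (listChromaticNumber (M □ completeBipartiteGraph (Fin a) (Fin (P ^ a)))) :=
      Nat.sInf_mem hne
    have h2 : Choosable (M □ completeBipartiteGraph (Fin a) (Fin (P ^ a))) (k + a - 1) :=
      h1.mono (by omega)
    exact hlb h2
  · intro b hb
    rw [Set.mem_setOf_eq] at hb
    by_contra hblt
    push_neg at hblt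
    have hch := scc_hard h a b ha hk hblt
    have hle : listChromaticNumber (M □ completeBipartiteGraph (Fin a) (Fin b)) ≤ k + a - 1 :=
      Nat.sInf_le hch
    omega
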